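/- arXiv:2109.10333 — 2 statements merged into one kernel-verified Lean document; each statement's English description precedes it below -/
import Mathlib

section
/- In the lower-bound construction graph H built from a graph G on n vertices with parameter k = ⌈√(log n)⌉: for each pair of distinct indices i, i' ∈ [n], there exists a vertex w ∈ W_i such that for all w' ∈ W_{i'}, N(w) ∩ S ≠ N(w') ∩ S. -/
/-- Vertices of the lower-bound construction graph `H` built from a graph on `n`
vertices with `m` edges and parameter `k`. -/
inductive HV (n m k : ℕ) : Type
  | s : Fin (2*k) → HV n m k
  | w : Fin n → Fin k → HV n m k
  | wleaf : Fin n → Fin k → HV n m k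
  | y1 : Fin m → Fin k → HV n m k
  | y2 : Fin m → Fin k → HV n m k
  | yc : Fin m → HV n m k
  | y1leaf : Fin m → Fin k → Fin 2 → HV n m k
  | y2leaf : Fin m → Fin k → Fin 3 → HV n m k
  | ycleaf : Fin m → Fin 4 → HV n m k
  deriving DecidableEq, Fintype

/-- Adjacency between the `β`-th vertex of a block encoding the number `i` and the
vertex `s_γ` of `S`: a matching with the first half of `S`, and binary encoding of `i`
(least significant bit first, bit `β*k+γ'` for the `γ'`-th vertex of the second half). -/
def sadj (n k : ℕ) (i : Fin n) (β : Fin k) (γ : Fin (2*k)) : Prop :=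
  γ.val = β.val ∨ (k ≤ γ.val ∧ Nat.testBit i.val (β.val * k + (γ.val - k)) = true)

/-- The base (asymmetric) adjacency relation of the construction; `ep j` gives the pair of
endpoints of the `j`-th edge of `G`. -/
def hrel (n m k : ℕ) (ep : Fin m → Fin n × Fin n) : HV n m k → HV n m k → Prop
  | HV.w i _, HV.w i' _ => i = i'
  | HV.w i β, HV.s γ => sadj n k i β γ
  | HV.wleaf i β, HV.w i' β' => i = i' ∧ β = β'
  | HV.y1 j _, HV.y1 j' _ => j = j'
  | HV.y2 j _, HV.y2 j' _ => j = j'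
  | HV.yc j, HV.y1 j' _ => j = j'
  | HV.yc j, HV.y2 j' _ => j = j'
  | HV.y1 j β, HV.s γ => sadj n k (ep j).1 β γ
  | HV.y2 j β, HV.s γ => sadj n k (ep j).2 β γ
  | HV.y1leaf j β _, HV.y1 j' β' => j = j' ∧ β = β'
  | HV.y2leaf j β _, HV.y2 j' β' => j = j' ∧ β = β'
  | HV.ycleaf j _, HV.yc j' => j = j'
  | _, _ => False

/-- The lower-bound construction graph `H`. -/
def Hgraph (n m k : ℕ) (ep : Fin m → Fin n × Fin n) : SimpleGraph (HV n m k) :=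
  SimpleGraph.fromRel (hrel n m k ep)

lemma sadj_high (n m : ℕ) (k : ℕ) (i : Fin n) (b a : ℕ) (hb : b < k) (hγ : k + a < 2*k) :
    sadj n k i ⟨b, hb⟩ ⟨k + a, hγ⟩ ↔ (i.val.testBit (b * k + a) = true) := by
  have h1 : ¬ (k + a = b) := by omega
  have h2 : k ≤ k + a := Nat.le_add_right k a
  have h3 : k + a - k = a := by omega
  simp [sadj, h1, h2, h3]

lemma sadj_low (n k : ℕ) (i : Fin n) (β : Fin k) (c : ℕ) (hc : c < k) (hγ : c < 2*k) :
    sadj n k i β ⟨c, hγ⟩ ↔ c = β.val := by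
  have : ¬ (k ≤ c) := by omega
  simp [sadj, this]

lemma adj_s_iff (n m k : ℕ) (ep : Fin m → Fin n × Fin n) (i : Fin n) (β : Fin k)
    (γ : Fin (2*k)) :
    (Hgraph n m k ep).Adj (HV.w i β) (HV.s γ) ↔ sadj n k i β γ := by
  simp [Hgraph, SimpleGraph.fromRel_adj, hrel]

/-- Distinguishability of the blocks `W_i` in the construction: for distinct `i, i'`,
some vertex `w ∈ W_i` has a neighborhood in `S` different from that of every vertex of
`W_{i'}`. -/
theorem W_blocks_distinguishable (n m k : ℕ) (ep : Fin m → Fin n × Fin n)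
    (hk : k = ⌈Real.sqrt (Real.logb 2 n)⌉₊) (hn : 1 ≤ n) :
    ∀ i i' : Fin n, i ≠ i' →
      ∃ β : Fin k, ∀ β' : Fin k,
        {γ : Fin (2 * k) | (Hgraph n m k ep).Adj (HV.w i β) (HV.s γ)} ≠
        {γ : Fin (2 * k) | (Hgraph n m k ep).Adj (HV.w i' β') (HV.s γ)} := by
  -- First: n ≤ 2 ^ (k * k)
  have hklog : Real.logb 2 n ≤ (k : ℝ) * k := by
    have h0 : (0:ℝ) ≤ Real.logb 2 n := by
      apply Real.logb_nonneg (by norm_num)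
      exact_mod_cast hn
    have hsq : Real.sqrt (Real.logb 2 n) ≤ (k : ℝ) := by
      rw [hk]; exact Nat.le_ceil _
    calc Real.logb 2 n = Real.sqrt (Real.logb 2 n) * Real.sqrt (Real.logb 2 n) :=
          (Real.mul_self_sqrt h0).symm
      _ ≤ (k : ℝ) * k := by
          exact mul_le_mul hsq hsq (Real.sqrt_nonneg _) (Nat.cast_nonneg _)
  have hn2 : n ≤ 2 ^ (k * k) := by
    have h2 : (n : ℝ) ≤ (2 : ℝ) ^ (k * k) := by
      have := Real.rpow_le_rpow_left_iff (x := 2) (by norm_num : (1:ℝ) < 2)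
        |>.mpr hklog
      have hlog : (2:ℝ) ^ Real.logb 2 (n:ℝ) = n := by
        apply Real.rpow_logb (by norm_num) (by norm_num)
        exact_mod_cast hn
      calc (n : ℝ) = (2:ℝ) ^ Real.logb 2 (n:ℝ) := hlog.symm
        _ ≤ (2:ℝ) ^ ((k : ℝ) * k) := by
            apply Real.rpow_le_rpow_of_exponent_le (by norm_num) hklog
        _ = (2 : ℝ) ^ (k * k : ℕ) := by
            rw [← Real.rpow_natCast 2 (k * k)]; norm_num
    exact_mod_cast h2
  intro i i' hne
  -- differing bit
  have hvne : i.val ≠ i'.val := fun h => hne (Fin.ext h)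
  have hbit : ∃ j, i.val.testBit j ≠ i'.val.testBit j := by
    by_contra h
    push_neg at h
    exact hvne (Nat.eq_of_testBit_eq fun j => h j)
  obtain ⟨j, hj⟩ := hbit
  have hjlt : j < k * k := by
    by_contra h
    push_neg at h
    have h1 : i.val.testBit j = false :=
      Nat.testBit_lt_two_pow (lt_of_lt_of_le i.isLt (le_trans hn2 (Nat.pow_le_pow_right (by norm_num) h)))
    have h2 : i'.val.testBit j = false :=
      Nat.testBit_lt_two_pow (lt_of_lt_of_le i'.isLt (le_trans hn2 (Nat.pow_le_pow_right (by norm_num) h)))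
    rw [h1, h2] at hj; exact hj rfl
  have hkpos : 0 < k := by
    rcases Nat.eq_zero_or_pos k with h | h
    · subst h; simp at hjlt
    · exact h
  obtain ⟨b, a, halt, hblt, rfl⟩ : ∃ b a, a < k ∧ b < k ∧ b * k + a = j := by
    refine ⟨j / k, j % k, Nat.mod_lt j hkpos, Nat.div_lt_iff_lt_mul hkpos |>.mpr hjlt, ?_⟩
    rw [Nat.mul_comm]; exact Nat.div_add_mod j k
  refine ⟨⟨b, hblt⟩, fun β' hEq => ?_⟩
  by_cases hbb : β'.val = b
  · -- compare at γ = k + a, where the encoded bits differ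
    have hγlt : k + a < 2 * k := by omega
    have hset := Set.ext_iff.mp hEq ⟨k + a, hγlt⟩
    simp only [Set.mem_setOf_eq, adj_s_iff] at hset
    rw [sadj_high n m k i b a hblt hγlt] at hset
    have hβ'eq : β' = ⟨b, hblt⟩ := Fin.ext hbb
    rw [hβ'eq, sadj_high n m k i' b a hblt hγlt] at hset
    apply hj
    cases h1 : i.val.testBit (b * k + a) <;> cases h2 : i'.val.testBit (b * k + a) <;>
      simp_all
  · -- compare at γ = b : matching edge present for β = b, absent for β'
    have hγlt : b < 2 * k := by omega
    have hset := Set.ext_iff.mp hEq ⟨b, hγlt⟩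
    simp only [Set.mem_setOf_eq, adj_s_iff] at hset
    rw [sadj_low n k i ⟨b, hblt⟩ b hblt hγlt, sadj_low n k i' β' b hblt hγlt] at hset
    exact hbb (hset.mp rfl).symm
end

section
/- Let H be the lower-bound construction graph built from a graph G with n vertices and m edges, with parameter k = ⌈√(log n)⌉. Then ι(H) = O(√(log n)) and |V(H)| = O(n²·√(log n)). Concretely, |S| ≤ 2√(log n) + 2, every connected component of H \ S has at most 10√(log n) + 2 vertices, and H has at most m + n components after removing S. -/
/-- Reachability inside a vertex subset `A`. -/
def ReachIn {V : Type*} (G : SimpleGraph V) (A : Set V) : V → V → Prop :=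
  Relation.ReflTransGen (fun a b => a ∈ A ∧ b ∈ A ∧ G.Adj a b)

/-- The connected component of `x` in the subgraph of `G` induced by `A`. -/
def compIn {V : Type*} (G : SimpleGraph V) (A : Set V) (x : V) : Set V :=
  {y | ReachIn G A x y}

-- auxiliary
def blk {n m k : ℕ} : HV n m k → Option (Fin n ⊕ Fin m)
  | HV.s _ => none
  | HV.w i _ => some (.inl i)
  | HV.wleaf i _ => some (.inl i)
  | HV.y1 j _ => some (.inr j)
  | HV.y2 j _ => some (.inr j)
  | HV.yc j => some (.inr j)
  | HV.y1leaf j _ _ => some (.inr j)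
  | HV.y2leaf j _ _ => some (.inr j)
  | HV.ycleaf j _ => some (.inr j)

lemma mem_S_iff {n m k : ℕ} (x : HV n m k) :
    x ∈ Set.range (HV.s : Fin (2*k) → HV n m k) ↔ blk x = none := by
  cases x <;> simp [blk]

lemma hrel_blk {n m k : ℕ} {ep : Fin m → Fin n × Fin n} {a b : HV n m k}
    (h : hrel n m k ep a b) :
    blk a = blk b ∨ blk a = none ∨ blk b = none := by
  cases a <;> cases b <;> simp_all [hrel, blk]

lemma adj_blk {n m k : ℕ} {ep : Fin m → Fin n × Fin n} {a b : HV n m k}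
    (ha : blk a ≠ none) (hb : blk b ≠ none)
    (h : (Hgraph n m k ep).Adj a b) : blk a = blk b := by
  rw [Hgraph, SimpleGraph.fromRel_adj] at h
  rcases h.2 with h' | h'
  · rcases hrel_blk h' with h'' | h'' | h'' <;> tauto
  · rcases hrel_blk h' with h'' | h'' | h'' <;> first | exact h''.symm | tauto

lemma compIn_blk {n m k : ℕ} {ep : Fin m → Fin n × Fin n} {x y : HV n m k}
    (h : ReachIn (Hgraph n m k ep) (Set.range (HV.s : Fin (2*k) → HV n m k))ᶜ x y) :
    blk y = blk x := by
  induction h with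
  | refl => rfl
  | tail _ hstep ih =>
      obtain ⟨hb, hc, hadj⟩ := hstep
      rw [Set.mem_compl_iff, mem_S_iff] at hb hc
      push_neg at hb hc
      rw [← adj_blk hb hc hadj]; exact ih

lemma step {n m k : ℕ} {ep : Fin m → Fin n × Fin n} {a b : HV n m k}
    (ha : blk a ≠ none) (hb : blk b ≠ none) (hne : a ≠ b)
    (h : hrel n m k ep a b ∨ hrel n m k ep b a) :
    ReachIn (Hgraph n m k ep) (Set.range (HV.s : Fin (2*k) → HV n m k))ᶜ a b := by
  refine Relation.ReflTransGen.single ⟨?_, ?_, ?_⟩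
  · rw [Set.mem_compl_iff, mem_S_iff]; exact ha
  · rw [Set.mem_compl_iff, mem_S_iff]; exact hb
  · rw [Hgraph, SimpleGraph.fromRel_adj]; exact ⟨hne, h⟩

lemma reach_symm {n m k : ℕ} {ep : Fin m → Fin n × Fin n} {A : Set (HV n m k)}
    {a b : HV n m k} (h : ReachIn (Hgraph n m k ep) A a b) :
    ReachIn (Hgraph n m k ep) A b a := by
  refine (@Relation.ReflTransGen.stdSymm _ (fun a b => a ∈ A ∧ b ∈ A ∧ (Hgraph n m k ep).Adj a b) ⟨?_⟩).symm _ _ h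
  rintro u v ⟨hu, hv, huv⟩
  exact ⟨hv, hu, huv.symm⟩

def hub {n m k : ℕ} (hk0 : 0 < k) : Fin n ⊕ Fin m → HV n m k
  | .inl i => HV.w i ⟨0, hk0⟩
  | .inr j => HV.yc j

lemma reach_hub {n m k : ℕ} {ep : Fin m → Fin n × Fin n} (hk0 : 0 < k)
    (t : Fin n ⊕ Fin m) (y : HV n m k) (hy : blk y = some t) :
    ReachIn (Hgraph n m k ep) (Set.range (HV.s : Fin (2*k) → HV n m k))ᶜ (hub hk0 t) y := by
  have key : ∀ (i : Fin n) (β : Fin k),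
      ReachIn (Hgraph n m k ep) (Set.range (HV.s : Fin (2*k) → HV n m k))ᶜ
        (HV.w i ⟨0, hk0⟩) (HV.w i β) := by
    intro i β
    by_cases hβ : β = ⟨0, hk0⟩
    · subst hβ; exact Relation.ReflTransGen.refl
    · exact step (by simp [blk]) (by simp [blk]) (by simp [Ne.symm hβ])
        (Or.inl (by simp [hrel]))
  have keyy1 : ∀ (j : Fin m) (β : Fin k),
      ReachIn (Hgraph n m k ep) (Set.range (HV.s : Fin (2*k) → HV n m k))ᶜ
        (HV.yc j) (HV.y1 j β) :=
    fun j β => step (by simp [blk]) (by simp [blk]) (by simp) (Or.inl (by simp [hrel]))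
  have keyy2 : ∀ (j : Fin m) (β : Fin k),
      ReachIn (Hgraph n m k ep) (Set.range (HV.s : Fin (2*k) → HV n m k))ᶜ
        (HV.yc j) (HV.y2 j β) :=
    fun j β => step (by simp [blk]) (by simp [blk]) (by simp) (Or.inl (by simp [hrel]))
  cases t with
  | inl i =>
    cases y with
    | w i' β => obtain rfl : i' = i := by simpa [blk] using hy
                exact key i' β
    | wleaf i' β =>
        obtain rfl : i' = i := by simpa [blk] using hy
        refine Relation.ReflTransGen.trans (key i' β) ?_
        exact step (a := HV.w i' β) (by simp [blk]) (by simp [blk]) (by simp)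
          (Or.inr (by simp [hrel]))
    | s γ => simp [blk] at hy
    | y1 j β => simp [blk] at hy
    | y2 j β => simp [blk] at hy
    | yc j => simp [blk] at hy
    | y1leaf j β c => simp [blk] at hy
    | y2leaf j β c => simp [blk] at hy
    | ycleaf j c => simp [blk] at hy
  | inr j =>
    cases y with
    | y1 j' β => obtain rfl : j' = j := by simpa [blk] using hy
                 exact keyy1 j' β
    | y2 j' β => obtain rfl : j' = j := by simpa [blk] using hy
                 exact keyy2 j' β
    | yc j' => obtain rfl : j' = j := by simpa [blk] using hy
               exact Relation.ReflTransGen.refl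
    | y1leaf j' β c =>
        obtain rfl : j' = j := by simpa [blk] using hy
        refine Relation.ReflTransGen.trans (keyy1 j' β) ?_
        exact step (a := HV.y1 j' β) (by simp [blk]) (by simp [blk]) (by simp)
          (Or.inr (by simp [hrel]))
    | y2leaf j' β c =>
        obtain rfl : j' = j := by simpa [blk] using hy
        refine Relation.ReflTransGen.trans (keyy2 j' β) ?_
        exact step (a := HV.y2 j' β) (by simp [blk]) (by simp [blk]) (by simp)
          (Or.inr (by simp [hrel]))
    | ycleaf j' c =>
        obtain rfl : j' = j := by simpa [blk] using hy
        exact step (a := hub hk0 (Sum.inr j')) (by simp [hub, blk]) (by simp [blk])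
          (by simp [hub]) (Or.inr (by simp [hub, hrel]))
    | s γ => simp [blk] at hy
    | w i β => simp [blk] at hy
    | wleaf i β => simp [blk] at hy

lemma compIn_eq {n m k : ℕ} {ep : Fin m → Fin n × Fin n} (hk0 : 0 < k)
    {x : HV n m k} {t : Fin n ⊕ Fin m} (hx : blk x = some t) :
    compIn (Hgraph n m k ep) (Set.range (HV.s : Fin (2*k) → HV n m k))ᶜ x
      = {y | blk y = some t} := by
  ext y
  constructor
  · intro h
    have := compIn_blk h
    simp only [Set.mem_setOf_eq]
    rw [this, hx]
  · intro h
    exact (reach_symm (reach_hub hk0 t x hx)).trans (reach_hub hk0 t y h)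

def wfun {n m k : ℕ} (i : Fin n) : Fin k ⊕ Fin k → HV n m k
  | .inl β => HV.w i β
  | .inr β => HV.wleaf i β

def yfun {n m k : ℕ} (j : Fin m) :
    Fin k ⊕ Fin k ⊕ Unit ⊕ (Fin k × Fin 2) ⊕ (Fin k × Fin 3) ⊕ Fin 4 → HV n m k
  | .inl β => HV.y1 j β
  | .inr (.inl β) => HV.y2 j β
  | .inr (.inr (.inl _)) => HV.yc j
  | .inr (.inr (.inr (.inl p))) => HV.y1leaf j p.1 p.2
  | .inr (.inr (.inr (.inr (.inl p)))) => HV.y2leaf j p.1 p.2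
  | .inr (.inr (.inr (.inr (.inr c)))) => HV.ycleaf j c

lemma ncard_range_le {α β : Type*} [Fintype α] (f : α → β) :
    (Set.range f).ncard ≤ Fintype.card α := by
  rw [← Set.image_univ]
  calc (f '' Set.univ).ncard ≤ (Set.univ : Set α).ncard := Set.ncard_image_le Set.finite_univ
  _ = Fintype.card α := by rw [Set.ncard_univ, Nat.card_eq_fintype_card]

lemma ncard_S {n m k : ℕ} :
    (Set.range (HV.s : Fin (2*k) → HV n m k)).ncard ≤ 2 * k := by
  simpa using ncard_range_le (HV.s : Fin (2*k) → HV n m k)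

lemma block_subset_w {n m k : ℕ} (i : Fin n) :
    {y : HV n m k | blk y = some (Sum.inl i)} ⊆ Set.range (wfun i) := by
  rintro y hy
  cases y <;> simp [blk] at hy
  · exact ⟨Sum.inl ‹_›, by simp [wfun, hy]⟩
  · exact ⟨Sum.inr ‹_›, by simp [wfun, hy]⟩

lemma block_subset_y {n m k : ℕ} (j : Fin m) :
    {y : HV n m k | blk y = some (Sum.inr j)} ⊆ Set.range (yfun j) := by
  rintro y hy
  cases y <;> simp [blk] at hy
  case y1 β => exact ⟨Sum.inl β, by simp [yfun, hy]⟩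
  case y2 β => exact ⟨Sum.inr (Sum.inl β), by simp [yfun, hy]⟩
  case yc => exact ⟨Sum.inr (Sum.inr (Sum.inl ())), by simp [yfun, hy]⟩
  case y1leaf β c => exact ⟨Sum.inr (Sum.inr (Sum.inr (Sum.inl (β, c)))), by simp [yfun, hy]⟩
  case y2leaf β c =>
    exact ⟨Sum.inr (Sum.inr (Sum.inr (Sum.inr (Sum.inl (β, c))))), by simp [yfun, hy]⟩
  case ycleaf c =>
    exact ⟨Sum.inr (Sum.inr (Sum.inr (Sum.inr (Sum.inr c)))), by simp [yfun, hy]⟩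

lemma ncard_block {n m k : ℕ} (t : Fin n ⊕ Fin m) :
    {y : HV n m k | blk y = some t}.ncard ≤ 7 * k + 5 := by
  cases t with
  | inl i =>
    calc {y : HV n m k | blk y = some (Sum.inl i)}.ncard
        ≤ (Set.range (wfun i)).ncard :=
          Set.ncard_le_ncard (block_subset_w i) (Set.toFinite _)
      _ ≤ Fintype.card (Fin k ⊕ Fin k) := ncard_range_le _
      _ ≤ 7 * k + 5 := by simp; omega
  | inr j =>
    calc {y : HV n m k | blk y = some (Sum.inr j)}.ncard
        ≤ (Set.range (yfun j)).ncard :=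
          Set.ncard_le_ncard (block_subset_y j) (Set.toFinite _)
      _ ≤ Fintype.card (Fin k ⊕ Fin k ⊕ Unit ⊕ (Fin k × Fin 2) ⊕ (Fin k × Fin 3) ⊕ Fin 4) :=
          ncard_range_le _
      _ ≤ 7 * k + 5 := by simp; omega

set_option synthInstance.maxHeartbeats 1000000 in
def hvEquiv {n m k : ℕ} : HV n m k ≃
    (Fin (2*k) ⊕ Fin n × Fin k ⊕ Fin n × Fin k ⊕ Fin m × Fin k ⊕ Fin m × Fin k ⊕ Fin m ⊕
      Fin m × Fin k × Fin 2 ⊕ Fin m × Fin k × Fin 3 ⊕ Fin m × Fin 4) where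
  toFun
    | HV.s γ => .inl γ
    | HV.w i β => .inr (.inl (i, β))
    | HV.wleaf i β => .inr (.inr (.inl (i, β)))
    | HV.y1 j β => .inr (.inr (.inr (.inl (j, β))))
    | HV.y2 j β => .inr (.inr (.inr (.inr (.inl (j, β)))))
    | HV.yc j => .inr (.inr (.inr (.inr (.inr (.inl j)))))
    | HV.y1leaf j β c => .inr (.inr (.inr (.inr (.inr (.inr (.inl (j, β, c)))))))
    | HV.y2leaf j β c => .inr (.inr (.inr (.inr (.inr (.inr (.inr (.inl (j, β, c))))))))
    | HV.ycleaf j c => .inr (.inr (.inr (.inr (.inr (.inr (.inr (.inr (j, c))))))))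
  invFun
    | .inl γ => HV.s γ
    | .inr (.inl (i, β)) => HV.w i β
    | .inr (.inr (.inl (i, β))) => HV.wleaf i β
    | .inr (.inr (.inr (.inl (j, β)))) => HV.y1 j β
    | .inr (.inr (.inr (.inr (.inl (j, β))))) => HV.y2 j β
    | .inr (.inr (.inr (.inr (.inr (.inl j))))) => HV.yc j
    | .inr (.inr (.inr (.inr (.inr (.inr (.inl (j, β, c))))))) => HV.y1leaf j β c
    | .inr (.inr (.inr (.inr (.inr (.inr (.inr (.inl (j, β, c)))))))) => HV.y2leaf j β c
    | .inr (.inr (.inr (.inr (.inr (.inr (.inr (.inr (j, c)))))))) => HV.ycleaf j c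
  left_inv := by intro x; cases x <;> rfl
  right_inv := by
    rintro (γ|⟨i,β⟩|⟨i,β⟩|⟨j,β⟩|⟨j,β⟩|j|⟨j,β,c⟩|⟨j,β,c⟩|⟨j,c⟩) <;> rfl

set_option synthInstance.maxHeartbeats 1000000 in
lemma card_HV {n m k : ℕ} :
    Fintype.card (HV n m k) = 2*k + 2*(n*k) + m*(7*k+5) := by
  rw [Fintype.card_congr (hvEquiv (n := n) (m := m) (k := k))]
  simp [Fintype.card_sum, Fintype.card_prod]
  ring


/-- Structural properties of the lower-bound construction `H`: with
`k = ⌈√(log₂ n)⌉` and `m ≤ n²`, the separator `S` has `|S| ≤ 2√(log₂ n) + 2`, every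
component of `H \ S` has at most `10k + 2` vertices, `H \ S` has at most `m + n`
components, `|V(H)| = O(n²·√(log n))`, and `ι(H) = O(√(log n))`. -/
theorem construction_properties (n m k : ℕ) (ep : Fin m → Fin n × Fin n)
    (hk : k = ⌈Real.sqrt (Real.logb 2 n)⌉₊) (hn : 2 ≤ n) (hm : m ≤ n ^ 2) :
    ((Set.range (HV.s : Fin (2 * k) → HV n m k)).ncard : ℝ) ≤
        2 * Real.sqrt (Real.logb 2 n) + 2 ∧
    (∀ x ∉ Set.range (HV.s : Fin (2 * k) → HV n m k),
      (compIn (Hgraph n m k ep) (Set.range (HV.s : Fin (2 * k) → HV n m k))ᶜ x).ncard ≤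
        10 * k + 2) ∧
    {C : Set (HV n m k) | ∃ x ∉ Set.range (HV.s : Fin (2 * k) → HV n m k),
        C = compIn (Hgraph n m k ep) (Set.range (HV.s : Fin (2 * k) → HV n m k))ᶜ x}.ncard
      ≤ m + n ∧
    ((Fintype.card (HV n m k) : ℝ) ≤ 42 * n ^ 2 * (Real.sqrt (Real.logb 2 n) + 1)) ∧
    ∃ κ : ℕ,
      (∃ S' : Set (HV n m k), S'.ncard ≤ κ ∧
        ∀ x ∉ S', S'.ncard + (compIn (Hgraph n m k ep) S'ᶜ x).ncard ≤ κ) ∧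
      (κ : ℝ) ≤ 12 * (Real.sqrt (Real.logb 2 n) + 1) := by
  set T : ℝ := Real.sqrt (Real.logb 2 n) with hT
  have hn2 : (2:ℝ) ≤ (n:ℝ) := by exact_mod_cast hn
  have hL : (1:ℝ) ≤ Real.logb 2 n := by
    calc (1:ℝ) = Real.logb 2 2 := (Real.logb_self_eq_one (by norm_num)).symm
    _ ≤ Real.logb 2 n := Real.logb_le_logb_of_le (by norm_num) (by norm_num) hn2
  have hT1 : 1 ≤ T := Real.one_le_sqrt.mpr hL
  have hk0 : 0 < k := by
    rw [hk]; exact Nat.one_le_ceil_iff.mpr (by linarith)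
  have hkT : (k:ℝ) ≤ T + 1 := by
    rw [hk]; exact (Nat.ceil_lt_add_one (by linarith : (0:ℝ) ≤ T)).le
  -- component size bound
  have hcomp : ∀ x ∉ Set.range (HV.s : Fin (2 * k) → HV n m k),
      (compIn (Hgraph n m k ep) (Set.range (HV.s : Fin (2 * k) → HV n m k))ᶜ x).ncard ≤
        7 * k + 5 := by
    intro x hx
    rw [mem_S_iff] at hx
    obtain ⟨t, ht⟩ := Option.ne_none_iff_exists'.mp hx
    rw [compIn_eq hk0 ht]
    exact ncard_block t
  refine ⟨?_, ?_, ?_, ?_, ?_⟩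
  · have := ncard_S (n := n) (m := m) (k := k)
    have : ((Set.range (HV.s : Fin (2 * k) → HV n m k)).ncard : ℝ) ≤ 2 * k := by
      exact_mod_cast this
    push_cast at this ⊢
    linarith
  · intro x hx
    have := hcomp x hx
    omega
  · calc {C : Set (HV n m k) | ∃ x ∉ Set.range (HV.s : Fin (2 * k) → HV n m k),
        C = compIn (Hgraph n m k ep) (Set.range (HV.s : Fin (2 * k) → HV n m k))ᶜ x}.ncard
        ≤ ((fun t : Fin n ⊕ Fin m => {y : HV n m k | blk y = some t}) '' Set.univ).ncard := by
          refine Set.ncard_le_ncard ?_ (Set.finite_univ.image _)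
          rintro C ⟨x, hx, rfl⟩
          rw [mem_S_iff] at hx
          obtain ⟨t, ht⟩ := Option.ne_none_iff_exists'.mp hx
          exact ⟨t, Set.mem_univ t, (compIn_eq hk0 ht).symm⟩
      _ ≤ (Set.univ : Set (Fin n ⊕ Fin m)).ncard := Set.ncard_image_le Set.finite_univ
      _ ≤ m + n := by
          rw [Set.ncard_univ, Nat.card_sum]
          simp [Nat.add_comm]
  · rw [card_HV]
    have hm' : (m:ℝ) ≤ (n:ℝ)^2 := by exact_mod_cast hm
    have hK0 : (0:ℝ) ≤ (k:ℝ) := Nat.cast_nonneg k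
    have hM0 : (0:ℝ) ≤ (m:ℝ) := Nat.cast_nonneg m
    push_cast
    nlinarith [mul_le_mul_of_nonneg_right hm' (show (0:ℝ) ≤ 7*(k:ℝ)+5 by linarith),
      mul_le_mul_of_nonneg_left hkT (show (0:ℝ) ≤ 7*(n:ℝ)^2 by positivity),
      mul_le_mul_of_nonneg_left hkT (show (0:ℝ) ≤ 2*(n:ℝ) by linarith),
      mul_le_mul_of_nonneg_right hn2 (show (0:ℝ) ≤ (n:ℝ)*(T+1) by nlinarith),
      mul_le_mul_of_nonneg_right hn2 (show (0:ℝ) ≤ (T+1) by linarith)]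
  · refine ⟨9 * k + 5, ⟨Set.range (HV.s : Fin (2 * k) → HV n m k), ?_, ?_⟩, ?_⟩
    · have := ncard_S (n := n) (m := m) (k := k); omega
    · intro x hx
      have h1 := ncard_S (n := n) (m := m) (k := k)
      have h2 := hcomp x hx
      omega
    · push_cast
      linarith
end
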